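/- arXiv:1507.08251 — 5 statements merged into one kernel-verified Lean document; each statement's English description precedes it below -/
import Mathlib

section
/- Let T be maximally monotone and h : X × X* → ℝ ∪ {+∞} a proper convex lsc function with h ≥ ⟨·,·⟩ and h(x,x*) = ⟨x,x*⟩ whenever x* ∈ T(x). Then the operator T_h defined by T_h(x) := {x* : (x*,x) ∈ ∂h(x,x*)} equals T. -/
open NormedSpace

noncomputable section

/-- Convexity for extended-real-valued functions. -/
def EConvexOn {E : Type*} [AddCommMonoid E] [Module ℝ E] (f : E → EReal) : Prop :=
  ∀ x y : E, ∀ a b : ℝ, 0 ≤ a → 0 ≤ b → a + b = 1 →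
    f (a • x + b • y) ≤ (a : EReal) * f x + (b : EReal) * f y

/-- Properness: somewhere finite and never `⊥` (i.e. values in `ℝ ∪ {+∞}`). -/
def EProper {E : Type*} (f : E → EReal) : Prop :=
  (∃ x, f x ≠ ⊤) ∧ ∀ x, f x ≠ ⊥

variable {X : Type*} [NormedAddCommGroup X] [NormedSpace ℝ X]

/-- The ε-subdifferential of `f : X → ℝ ∪ {+∞}` at `x`. -/
def epsSubdiff (f : X → EReal) (ε : ℝ) (x : X) : Set (StrongDual ℝ X) :=
  {p | f x ≠ ⊤ ∧ ∀ y : X, f x + ((p (y - x) : ℝ) : EReal) ≤ f y + (ε : EReal)}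

/-- The Fenchel conjugate of `f : X → ℝ ∪ {+∞}`. -/
def fconj (f : X → EReal) (p : StrongDual ℝ X) : EReal :=
  ⨆ y : X, ((p y : ℝ) : EReal) - f y

/-- The duality pairing `⟨x, x*⟩` on `X × X*`. -/
def pairing (z : X × StrongDual ℝ X) : ℝ := z.2 z.1

/-- `h* ∘ i`, the conjugate of `h : X × X* → ℝ ∪ {+∞}` with respect to the pairing
`⟨(x,x*),(y*,y)⟩ = ⟨x,y*⟩ + ⟨y,x*⟩`, composed with the swap `i(x,x*) = (x*,x)`. -/
def conjI (h : X × StrongDual ℝ X → EReal) (z : X × StrongDual ℝ X) : EReal :=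
  ⨆ w : X × StrongDual ℝ X, ((z.2 w.1 + w.2 z.1 : ℝ) : EReal) - h w

/-- The averaging map `A h := (1/2)(h + h* ∘ i)`. -/
def Amap (h : X × StrongDual ℝ X → EReal) : X × StrongDual ℝ X → EReal :=
  fun z => (((1 : ℝ)/2 : ℝ) : EReal) * (h z + conjI h z)

/-- Monotone multivalued operator `T : X ⇉ X*`. -/
def IsMonotoneOp (T : X → Set (StrongDual ℝ X)) : Prop :=
  ∀ ⦃x p y q⦄, p ∈ T x → q ∈ T y → 0 ≤ (p - q) (x - y)

/-- Maximally monotone operator. -/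
def IsMaxMonotoneOp (T : X → Set (StrongDual ℝ X)) : Prop :=
  IsMonotoneOp T ∧ ∀ x p, (∀ y q, q ∈ T y → 0 ≤ (p - q) (x - y)) → p ∈ T x

/-- The Fitzpatrick family `H(T)`: lsc convex `h ≥ ⟨·,·⟩` with equality on `gph T`. -/
def InFitzFamily (T : X → Set (StrongDual ℝ X)) (h : X × StrongDual ℝ X → EReal) : Prop :=
  LowerSemicontinuous h ∧ EConvexOn h ∧ (∀ z, (pairing z : EReal) ≤ h z) ∧
    ∀ x p, p ∈ T x → h (x, p) = (pairing (x, p) : EReal)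

/-- The δ-subdifferential of `h : X × X* → ℝ ∪ {+∞}` with respect to the pairing
`⟨(x,x*),(y*,y)⟩ = ⟨x,y*⟩ + ⟨y,x*⟩`. -/
def epsSubdiff2 (h : X × StrongDual ℝ X → EReal) (δ : ℝ) (z : X × StrongDual ℝ X) :
    Set (StrongDual ℝ X × X) :=
  {w | h z ≠ ⊤ ∧ ∀ u : X × StrongDual ℝ X,
    h z + ((w.1 (u.1 - z.1) + (u.2 - z.2) w.2 : ℝ) : EReal) ≤ h u + (δ : EReal)}

/-- The Fenchel–Young function `f^{FY}(x,x*) = f(x) + f*(x*)`. -/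
def FYfn (f : X → EReal) (z : X × StrongDual ℝ X) : EReal := f z.1 + fconj f z.2

/-!
On `gph T` the convex function `h` touches the quadratic form `pairing` from above, so along
every segment starting at `(x, x*) ∈ gph T` the slope of `h` dominates that of `pairing`, whose
gradient at `(x, x*)` is `(x*, x)`; hence `gph T ⊆ gph T_h`. Adding the subgradient inequalities
at two points of `gph T_h` shows that `T_h` is monotone, and maximality of `T` gives `T_h = T`.
-/

open Filter Topology

lemma pairing_add_smul (z w : X × StrongDual ℝ X) (t : ℝ) :
    pairing (z + t • w) = pairing z + t * (z.2 w.1 + w.2 z.1) + t ^ 2 * pairing w := by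
  simp only [pairing, Prod.fst_add, Prod.snd_add, Prod.smul_fst, Prod.smul_snd, map_add, map_smul,
    add_apply, smul_apply, smul_eq_mul]
  ring

lemma le_of_forall_mem_Ioo_add_mul_le {a b r : ℝ} (H : ∀ t ∈ Set.Ioo (0 : ℝ) 1, a + t * b ≤ r) :
    a ≤ r := by
  have hlim : Tendsto (fun t : ℝ => a + t * b) (𝓝[>] 0) (𝓝 a) := by
    have hcont : Continuous fun t : ℝ => a + t * b := by fun_prop
    simpa using (hcont.tendsto 0).mono_left nhdsWithin_le_nhds
  exact le_of_tendsto hlim (eventually_of_mem (Ioo_mem_nhdsGT one_pos) H)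

lemma exists_coe_eq_of_pairing_le {h : X × StrongDual ℝ X → EReal}
    (hge : ∀ z, (pairing z : EReal) ≤ h z) {z : X × StrongDual ℝ X} (hz : h z ≠ ⊤) :
    ∃ c : ℝ, h z = c :=
  ⟨_, (EReal.coe_toReal hz (ne_bot_of_le_ne_bot (EReal.coe_ne_bot _) (hge z))).symm⟩

lemma le_of_mem_epsSubdiff2 {h : X × StrongDual ℝ X → EReal} {δ : ℝ}
    {z u : X × StrongDual ℝ X} {w : StrongDual ℝ X × X} (hw : w ∈ epsSubdiff2 h δ z)
    {a b : ℝ} (hz : h z = a) (hu : h u = b) :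
    a + (w.1 (u.1 - z.1) + (u.2 - z.2) w.2) ≤ b + δ := by
  have := hw.2 u
  rw [hz, hu] at this
  exact_mod_cast this

/-- The Fitzpatrick operator `T_h`. -/
def fitzpatrickOp (h : X × StrongDual ℝ X → EReal) (x : X) : Set (StrongDual ℝ X) :=
  {p | (p, x) ∈ epsSubdiff2 h 0 (x, p)}

lemma isMonotoneOp_fitzpatrickOp {h : X × StrongDual ℝ X → EReal}
    (hge : ∀ z, (pairing z : EReal) ≤ h z) : IsMonotoneOp (fitzpatrickOp h) := by
  intro x p y q hp hq
  obtain ⟨a, ha⟩ := exists_coe_eq_of_pairing_le hge hp.1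
  obtain ⟨b, hb⟩ := exists_coe_eq_of_pairing_le hge hq.1
  have hxy := le_of_mem_epsSubdiff2 hp ha hb
  have hyx := le_of_mem_epsSubdiff2 hq hb ha
  simp only [map_sub, sub_apply] at hxy hyx ⊢
  linarith

lemma swap_mem_epsSubdiff2_of_eq_pairing {h : X × StrongDual ℝ X → EReal} (hconv : EConvexOn h)
    (hge : ∀ z, (pairing z : EReal) ≤ h z) {z : X × StrongDual ℝ X} (hz : h z = pairing z) :
    (z.2, z.1) ∈ epsSubdiff2 h 0 z := by
  refine ⟨by simp [hz], fun u => ?_⟩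
  rcases eq_or_ne (h u) ⊤ with hu | hu
  · simp [hu]
  obtain ⟨r, hr⟩ := exists_coe_eq_of_pairing_le hge hu
  have hslope : z.2 (u.1 - z.1) + (u.2 - z.2) z.1 ≤ r - pairing z := by
    refine le_of_forall_mem_Ioo_add_mul_le (b := pairing (u - z)) fun t ht => ?_
    have hcomb : (1 - t) • z + t • u = z + t • (u - z) := by module
    have hchord := (hge _).trans (hconv z u (1 - t) t (by linarith [ht.2]) ht.1.le (by ring))
    rw [hcomb, hz, hr, pairing_add_smul] at hchord
    have hchord' : pairing z + t * (z.2 (u - z).1 + (u - z).2 z.1) + t ^ 2 * pairing (u - z)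
        ≤ (1 - t) * pairing z + t * r := by exact_mod_cast hchord
    simp only [Prod.fst_sub, Prod.snd_sub] at hchord'
    nlinarith [ht.1]
  rw [hz, hr]
  exact_mod_cast (by linarith : pairing z + (z.2 (u.1 - z.1) + (u.2 - z.2) z.1) ≤ r + 0)

lemma IsMaxMonotoneOp.eq_of_isMonotoneOp_of_subset {T S : X → Set (StrongDual ℝ X)}
    (hT : IsMaxMonotoneOp T) (hS : IsMonotoneOp S) (hTS : ∀ x, T x ⊆ S x) (x : X) :
    S x = T x :=
  Set.Subset.antisymm (fun p hp => hT.2 x p fun _ _ hq => hS hp (hTS _ hq)) (hTS x)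

/-- for `h ∈ H(T)` with `T` maximally monotone, the Fitzpatrick
operator `T_h(x) := {x* : (x*,x) ∈ ∂h(x,x*)}` coincides with `T`. -/
theorem statement7 (T : X → Set (StrongDual ℝ X)) (hT : IsMaxMonotoneOp T)
    (h : X × StrongDual ℝ X → EReal) (hF : InFitzFamily T h) :
    ∀ x : X, {p : StrongDual ℝ X | (p, x) ∈ epsSubdiff2 h 0 (x, p)} = T x := by
  obtain ⟨-, hconv, hge, heq⟩ := hF
  have hT_sub : ∀ x, T x ⊆ fitzpatrickOp h x := fun x p hp =>
    swap_mem_epsSubdiff2_of_eq_pairing hconv hge (heq x p hp)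
  exact hT.eq_of_isMonotoneOp_of_subset (isMonotoneOp_fitzpatrickOp hge) hT_sub
end
end

section
/- For h ∈ H(T), the sequence of iterates Aⁿh is pointwise non-increasing, the sequence (Aⁿh)* ∘ i is pointwise non-decreasing, and for all n, (Aⁿh)(x,x*) - ((Aⁿh)* ∘ i)(x,x*) ≤ 2^{-(n-1)}((A h)(x,x*) - ((A h)* ∘ i)(x,x*)) for (x,x*) ∈ dom(h) ∩ dom(h* ∘ i). -/
open NormedSpace

noncomputable section

variable {X : Type*} [NormedAddCommGroup X] [NormedSpace ℝ X]

/-!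
Every iterate `Aⁿh` stays convex, above the duality pairing and equal to it on `gph T`. For such
`g`, maximal monotonicity of `T` gives `⟨·,·⟩ ≤ g* ∘ i`, and adding the two Fenchel–Young
inequalities `⟨z, i w⟩ ≤ g w + (g* ∘ i) z` and `⟨z, i w⟩ ≤ g z + (g* ∘ i) w` gives
`(A g)* ∘ i ≤ A g`. Hence `A (Aⁿh) = ½ (Aⁿh + (Aⁿh)* ∘ i) ≤ Aⁿh` for `n ≥ 1`, conjugation
reverses this, and with `aₙ = Aⁿh z`, `bₙ = (Aⁿh)* ∘ i z` the gap halves at each step: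
`aₙ₊₁ - bₙ₊₁ ≤ aₙ₊₁ - bₙ = ½ (aₙ - bₙ)`.
-/

open Filter Topology Function

-- `crossPairing z w = ⟨z, i w⟩`, so that `conjI g z = ⨆ w, crossPairing z w - g w`.
def crossPairing (z w : X × StrongDual ℝ X) : ℝ := z.2 w.1 + w.2 z.1

lemma crossPairing_comm (z w : X × StrongDual ℝ X) : crossPairing z w = crossPairing w z := by
  simp only [crossPairing]; ring

lemma crossPairing_self (z : X × StrongDual ℝ X) : crossPairing z z = 2 * pairing z := by
  simp only [crossPairing, pairing]; ring

lemma crossPairing_smul_add_left (a b : ℝ) (x y w : X × StrongDual ℝ X) :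
    crossPairing (a • x + b • y) w = a * crossPairing x w + b * crossPairing y w := by
  simp only [crossPairing, Prod.fst_add, Prod.snd_add, Prod.smul_fst, Prod.smul_snd,
    add_apply, smul_apply, map_add, map_smul, smul_eq_mul]
  ring

lemma pairing_smul_add (a b : ℝ) (z w : X × StrongDual ℝ X) :
    pairing (a • z + b • w) = a ^ 2 * pairing z + a * b * crossPairing z w + b ^ 2 * pairing w := by
  simp only [pairing, crossPairing, Prod.fst_add, Prod.snd_add, Prod.smul_fst, Prod.smul_snd,
    add_apply, smul_apply, map_add, map_smul, smul_eq_mul]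
  ring

lemma EReal.half_mul_add_self (x : EReal) : (((1 : ℝ) / 2 : ℝ) : EReal) * (x + x) = x := by
  rw [EReal.left_distrib_of_nonneg_of_ne_top (by norm_num) (EReal.coe_ne_top _),
    ← EReal.right_distrib_of_nonneg (by norm_num) (by norm_num), ← EReal.coe_add]
  norm_num

section EConvexOn

variable {E : Type*} [AddCommMonoid E] [Module ℝ E] {f g : E → EReal}

lemma EConvexOn.add (hf : EConvexOn f) (hg : EConvexOn g) : EConvexOn (f + g) := by
  intro x y a b ha hb hab
  calc f (a • x + b • y) + g (a • x + b • y)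
      ≤ (a * f x + b * f y) + (a * g x + b * g y) :=
        add_le_add (hf x y a b ha hb hab) (hg x y a b ha hb hab)
    _ = a * (f x + g x) + b * (f y + g y) := by
        rw [EReal.left_distrib_of_nonneg_of_ne_top (EReal.coe_nonneg.2 ha) (EReal.coe_ne_top a),
          EReal.left_distrib_of_nonneg_of_ne_top (EReal.coe_nonneg.2 hb) (EReal.coe_ne_top b),
          add_add_add_comm]

lemma EConvexOn.const_mul {c : ℝ} (hc : 0 ≤ c) (hf : EConvexOn f) :
    EConvexOn fun z => (c : EReal) * f z := by
  intro x y a b ha hb hab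
  calc (c : EReal) * f (a • x + b • y) ≤ c * (a * f x + b * f y) :=
        mul_le_mul_of_nonneg_left (hf x y a b ha hb hab) (EReal.coe_nonneg.2 hc)
    _ = a * (c * f x) + b * (c * f y) := by
        rw [EReal.left_distrib_of_nonneg_of_ne_top (EReal.coe_nonneg.2 hc) (EReal.coe_ne_top c),
          mul_left_comm, mul_left_comm (c : EReal)]

end EConvexOn

lemma IsMaxMonotoneOp.exists_mem_apply_sub_nonpos {T : X → Set (StrongDual ℝ X)}
    (hT : IsMaxMonotoneOp T) (z : X × StrongDual ℝ X) :
    ∃ y q, q ∈ T y ∧ (z.2 - q) (z.1 - y) ≤ 0 := by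
  by_contra! hpos
  have hz : z.2 ∈ T z.1 := hT.2 z.1 z.2 fun y q hq => (hpos y q hq).le
  simpa using hpos z.1 z.2 hz

section conjI

variable {g g' : X × StrongDual ℝ X → EReal}

lemma le_conjI (g : X × StrongDual ℝ X → EReal) (z w : X × StrongDual ℝ X) :
    (crossPairing z w : EReal) - g w ≤ conjI g z :=
  le_iSup (fun w => ((crossPairing z w : ℝ) : EReal) - g w) w

lemma conjI_le_of_le (hg : ∀ w, g w ≤ g' w) (z : X × StrongDual ℝ X) : conjI g' z ≤ conjI g z :=
  iSup_mono fun w => EReal.sub_le_sub le_rfl (hg w)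

lemma coe_crossPairing_le_add_conjI {z w : X × StrongDual ℝ X} (hgw : g w ≠ ⊥)
    (hgz : conjI g z ≠ ⊥) : (crossPairing z w : EReal) ≤ conjI g z + g w :=
  (EReal.sub_le_iff_le_add (.inl hgw) (.inr hgz)).1 (le_conjI g z w)

lemma econvexOn_conjI (hg : ∀ z, g z ≠ ⊥) : EConvexOn (conjI g) := by
  intro x y a b ha hb hab
  refine iSup_le fun w => ?_
  rcases eq_or_ne (g w) ⊤ with htop | hne
  · rw [htop, EReal.sub_top]
    exact bot_le
  lift g w to ℝ using ⟨hne, hg w⟩ with s hs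
  have hsplit : ((crossPairing (a • x + b • y) w : ℝ) : EReal) - s =
      a * ((crossPairing x w - s : ℝ) : EReal) + b * ((crossPairing y w - s : ℝ) : EReal) := by
    rw [crossPairing_smul_add_left]
    norm_cast
    linear_combination s * hab
  change ((crossPairing (a • x + b • y) w : ℝ) : EReal) - s ≤ _
  rw [hsplit]
  gcongr
  · rw [EReal.coe_sub, hs]
    exact le_conjI g x w
  · rw [EReal.coe_sub, hs]
    exact le_conjI g y w

lemma Amap_ne_top {z : X × StrongDual ℝ X} (hg : g z ≠ ⊤) (hcg : conjI g z ≠ ⊤) :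
    Amap g z ≠ ⊤ :=
  (EReal.mul_ne_top _ _).2 ⟨.inl (EReal.coe_ne_bot _), .inl (by norm_num),
    .inl (EReal.coe_ne_top _), .inr (EReal.add_ne_top hg hcg)⟩

lemma Amap_le_self (hcg : ∀ w, conjI g w ≤ g w) (z : X × StrongDual ℝ X) : Amap g z ≤ g z :=
  calc Amap g z ≤ (((1 : ℝ) / 2 : ℝ) : EReal) * (g z + g z) := by
        unfold Amap; gcongr; exact hcg z
    _ = g z := EReal.half_mul_add_self _

lemma conjI_Amap_le_Amap (hg : ∀ z, g z ≠ ⊥) (hcg : ∀ z, conjI g z ≠ ⊥)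
    (z : X × StrongDual ℝ X) : conjI (Amap g) z ≤ Amap g z := by
  refine iSup_le fun w => EReal.sub_le_of_le_add ?_
  calc (crossPairing z w : EReal)
      = (((1 : ℝ) / 2 : ℝ) : EReal) * (crossPairing z w + crossPairing z w) :=
        (EReal.half_mul_add_self _).symm
    _ ≤ (((1 : ℝ) / 2 : ℝ) : EReal) * ((conjI g z + g w) + (conjI g w + g z)) := by
        gcongr
        · exact coe_crossPairing_le_add_conjI (hg w) (hcg z)
        · rw [crossPairing_comm]
          exact coe_crossPairing_le_add_conjI (hg z) (hcg w)
    _ = Amap g z + Amap g w := by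
        unfold Amap
        rw [← EReal.left_distrib_of_nonneg_of_ne_top (by norm_num) (EReal.coe_ne_top _)]
        congr 1
        abel

lemma Amap_sub_conjI_Amap_le {z : X × StrongDual ℝ X} (hgt : g z ≠ ⊤) (hgb : g z ≠ ⊥)
    (hcgt : conjI g z ≠ ⊤) (hcgb : conjI g z ≠ ⊥) (hmono : conjI g z ≤ conjI (Amap g) z) :
    Amap g z - conjI (Amap g) z ≤ (((1 : ℝ) / 2 : ℝ) : EReal) * (g z - conjI g z) :=
  calc Amap g z - conjI (Amap g) z ≤ Amap g z - conjI g z := EReal.sub_le_sub le_rfl hmono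
    _ = (((1 : ℝ) / 2 : ℝ) : EReal) * (g z - conjI g z) := by
        unfold Amap
        lift g z to ℝ using ⟨hgt, hgb⟩ with r
        lift conjI g z to ℝ using ⟨hcgt, hcgb⟩ with c
        norm_cast
        ring

end conjI

lemma EConvexOn.coe_crossPairing_sub_pairing_le {g : X × StrongDual ℝ X → EReal}
    (hconv : EConvexOn g) (hge : ∀ z, (pairing z : EReal) ≤ g z) {w : X × StrongDual ℝ X}
    (hw : g w = pairing w) (z : X × StrongDual ℝ X) :
    ((crossPairing z w - pairing w : ℝ) : EReal) ≤ g z := by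
  rcases eq_or_ne (g z) ⊤ with htop | hne
  · simp [htop]
  lift g z to ℝ using ⟨hne, ne_bot_of_le_ne_bot (EReal.coe_ne_bot _) (hge z)⟩ with r hr
  -- A convex majorant of the quadratic form `pairing` touching it at `w` lies above its tangent
  -- at `w`: compare `g ≥ pairing` with convexity of `g` at `t z + (1 - t) w`, then let `t → 0⁺`.
  have hbound : ∀ t ∈ Set.Ioc (0 : ℝ) 1,
      t * pairing z + (1 - t) * (crossPairing z w - pairing w) ≤ r := by
    rintro t ⟨ht0, ht1⟩
    have hconv_t := (hge _).trans (hconv z w t (1 - t) ht0.le (by linarith) (by ring))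
    rw [← hr, hw, pairing_smul_add] at hconv_t
    norm_cast at hconv_t
    refine le_of_mul_le_mul_left ?_ ht0
    linear_combination hconv_t
  have hlim : Tendsto (fun t : ℝ => t * pairing z + (1 - t) * (crossPairing z w - pairing w))
      (𝓝[>] 0) (𝓝 (crossPairing z w - pairing w)) := by
    have hcont : Continuous fun t : ℝ =>
        t * pairing z + (1 - t) * (crossPairing z w - pairing w) := by fun_prop
    simpa using (hcont.tendsto 0).mono_left nhdsWithin_le_nhds
  exact_mod_cast le_of_tendsto hlim (eventually_of_mem (Ioc_mem_nhdsGT one_pos) hbound)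

structure InConvexFitzFamily (T : X → Set (StrongDual ℝ X)) (g : X × StrongDual ℝ X → EReal) :
    Prop where
  convex : EConvexOn g
  pairing_le : ∀ z, (pairing z : EReal) ≤ g z
  eq_pairing_of_mem : ∀ x p, p ∈ T x → g (x, p) = pairing (x, p)

lemma InFitzFamily.inConvexFitzFamily {T : X → Set (StrongDual ℝ X)}
    {g : X × StrongDual ℝ X → EReal} (hF : InFitzFamily T g) : InConvexFitzFamily T g :=
  ⟨hF.2.1, hF.2.2.1, hF.2.2.2⟩

namespace InConvexFitzFamily

variable {T : X → Set (StrongDual ℝ X)} {g : X × StrongDual ℝ X → EReal}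

lemma ne_bot (hg : InConvexFitzFamily T g) (z : X × StrongDual ℝ X) : g z ≠ ⊥ :=
  ne_bot_of_le_ne_bot (EReal.coe_ne_bot _) (hg.pairing_le z)

lemma pairing_le_conjI (hT : IsMaxMonotoneOp T) (hg : InConvexFitzFamily T g)
    (z : X × StrongDual ℝ X) : (pairing z : EReal) ≤ conjI g z := by
  obtain ⟨y, q, hq, hnonpos⟩ := hT.exists_mem_apply_sub_nonpos z
  calc (pairing z : EReal) ≤ ((crossPairing z (y, q) - pairing (y, q) : ℝ) : EReal) := by
        simp only [map_sub, sub_apply] at hnonpos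
        simp only [crossPairing, pairing, EReal.coe_le_coe_iff]
        linarith
    _ = crossPairing z (y, q) - g (y, q) := by rw [hg.eq_pairing_of_mem y q hq, EReal.coe_sub]
    _ ≤ conjI g z := le_conjI g z (y, q)

lemma conjI_ne_bot (hT : IsMaxMonotoneOp T) (hg : InConvexFitzFamily T g)
    (z : X × StrongDual ℝ X) : conjI g z ≠ ⊥ :=
  ne_bot_of_le_ne_bot (EReal.coe_ne_bot _) (hg.pairing_le_conjI hT z)

lemma conjI_eq_pairing_of_mem (hg : InConvexFitzFamily T g) {x : X} {p : StrongDual ℝ X}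
    (hp : p ∈ T x) : conjI g (x, p) = pairing (x, p) := by
  have hgxp := hg.eq_pairing_of_mem x p hp
  apply le_antisymm
  · refine iSup_le fun w => ?_
    calc (crossPairing (x, p) w : EReal) - g w
        ≤ crossPairing (x, p) w - ((crossPairing w (x, p) - pairing (x, p) : ℝ) : EReal) :=
          EReal.sub_le_sub le_rfl (hg.convex.coe_crossPairing_sub_pairing_le hg.pairing_le hgxp w)
      _ = pairing (x, p) := by
          rw [crossPairing_comm]
          norm_cast
          ring
  · calc (pairing (x, p) : EReal)
        = ((crossPairing (x, p) (x, p) - pairing (x, p) : ℝ) : EReal) := by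
          rw [crossPairing_self]
          norm_cast
          ring
      _ = crossPairing (x, p) (x, p) - g (x, p) := by rw [hgxp, EReal.coe_sub]
      _ ≤ conjI g (x, p) := le_conjI g _ _

lemma amap (hT : IsMaxMonotoneOp T) (hg : InConvexFitzFamily T g) :
    InConvexFitzFamily T (Amap g) where
  convex := (hg.convex.add (econvexOn_conjI hg.ne_bot)).const_mul (by norm_num)
  pairing_le z :=
    calc (pairing z : EReal) = (((1 : ℝ) / 2 : ℝ) : EReal) * (pairing z + pairing z) :=
          (EReal.half_mul_add_self _).symm
      _ ≤ Amap g z := by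
          unfold Amap
          gcongr
          exacts [hg.pairing_le z, hg.pairing_le_conjI hT z]
  eq_pairing_of_mem x p hp := by
    rw [Amap, hg.eq_pairing_of_mem x p hp, hg.conjI_eq_pairing_of_mem hp,
      EReal.half_mul_add_self]

lemma conjI_Amap_le (hT : IsMaxMonotoneOp T) (hg : InConvexFitzFamily T g)
    (z : X × StrongDual ℝ X) : conjI (Amap g) z ≤ Amap g z :=
  conjI_Amap_le_Amap hg.ne_bot (hg.conjI_ne_bot hT) z

lemma iterate_amap (hT : IsMaxMonotoneOp T) (hg : InConvexFitzFamily T g) (n : ℕ) :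
    InConvexFitzFamily T (Amap^[n] g) := by
  induction n with
  | zero => exact hg
  | succ m ih => rw [iterate_succ_apply']; exact ih.amap hT

lemma conjI_iterate_Amap_le (hT : IsMaxMonotoneOp T) (hg : InConvexFitzFamily T g) {n : ℕ}
    (hn : 1 ≤ n) (z : X × StrongDual ℝ X) : conjI (Amap^[n] g) z ≤ Amap^[n] g z := by
  obtain ⟨m, rfl⟩ := Nat.exists_eq_add_of_le' hn
  rw [iterate_succ_apply']
  exact (hg.iterate_amap hT m).conjI_Amap_le hT z

lemma iterate_Amap_succ_le (hT : IsMaxMonotoneOp T) (hg : InConvexFitzFamily T g) {n : ℕ}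
    (hn : 1 ≤ n) (z : X × StrongDual ℝ X) : Amap^[n + 1] g z ≤ Amap^[n] g z := by
  rw [iterate_succ_apply']
  exact Amap_le_self (hg.conjI_iterate_Amap_le hT hn) z

lemma iterate_Amap_le_Amap (hT : IsMaxMonotoneOp T) (hg : InConvexFitzFamily T g) {n : ℕ}
    (hn : 1 ≤ n) (z : X × StrongDual ℝ X) : Amap^[n] g z ≤ Amap g z := by
  induction n, hn using Nat.le_induction with
  | base => rfl
  | succ m hm ih => exact (hg.iterate_Amap_succ_le hT hm z).trans ih

lemma iterate_Amap_sub_conjI_le (hT : IsMaxMonotoneOp T) (hg : InConvexFitzFamily T g)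
    {z : X × StrongDual ℝ X} (hz : g z ≠ ⊤) (hcz : conjI g z ≠ ⊤) {n : ℕ} (hn : 1 ≤ n) :
    Amap^[n] g z - conjI (Amap^[n] g) z ≤
      (((1 : ℝ) / 2 ^ (n - 1) : ℝ) : EReal) * (Amap g z - conjI (Amap g) z) := by
  induction n, hn using Nat.le_induction with
  | base => simp
  | succ m hm ih =>
    have hfam := hg.iterate_amap hT m
    have hA : Amap^[m] g z ≠ ⊤ :=
      ne_top_of_le_ne_top (Amap_ne_top hz hcz) (hg.iterate_Amap_le_Amap hT hm z)
    have hmono : conjI (Amap^[m] g) z ≤ conjI (Amap (Amap^[m] g)) z := by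
      rw [← iterate_succ_apply' Amap]
      exact conjI_le_of_le (hg.iterate_Amap_succ_le hT hm) z
    calc Amap^[m + 1] g z - conjI (Amap^[m + 1] g) z
        ≤ (((1 : ℝ) / 2 : ℝ) : EReal) * (Amap^[m] g z - conjI (Amap^[m] g) z) := by
          rw [iterate_succ_apply']
          exact Amap_sub_conjI_Amap_le hA (hfam.ne_bot z)
            (ne_top_of_le_ne_top hA (hg.conjI_iterate_Amap_le hT hm z)) (hfam.conjI_ne_bot hT z)
            hmono
      _ ≤ (((1 : ℝ) / 2 : ℝ) : EReal) *
            ((((1 : ℝ) / 2 ^ (m - 1) : ℝ) : EReal) * (Amap g z - conjI (Amap g) z)) := by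
          gcongr
      _ = (((1 : ℝ) / 2 ^ (m + 1 - 1) : ℝ) : EReal) * (Amap g z - conjI (Amap g) z) := by
          obtain ⟨k, rfl⟩ := Nat.exists_eq_add_of_le' hm
          rw [← mul_assoc, ← EReal.coe_mul, Nat.add_sub_cancel, Nat.add_sub_cancel, pow_succ]
          norm_num

end InConvexFitzFamily

theorem statement10_general (T : X → Set (StrongDual ℝ X)) (hT : IsMaxMonotoneOp T)
    (h : X × StrongDual ℝ X → EReal) (hF : InFitzFamily T h) :
    ∀ z : X × StrongDual ℝ X,
      (∀ n : ℕ, 1 ≤ n → Amap^[n + 1] h z ≤ Amap^[n] h z) ∧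
      (∀ n : ℕ, 1 ≤ n → conjI (Amap^[n] h) z ≤ conjI (Amap^[n + 1] h) z) ∧
      (∀ n : ℕ, 1 ≤ n → h z ≠ ⊤ → conjI h z ≠ ⊤ →
        Amap^[n] h z - conjI (Amap^[n] h) z ≤
          (((1 : ℝ) / 2 ^ (n - 1) : ℝ) : EReal) *
            (Amap h z - conjI (Amap h) z)) := by
  have hg := hF.inConvexFitzFamily
  intro z
  exact ⟨fun n hn => hg.iterate_Amap_succ_le hT hn z,
    fun n hn => conjI_le_of_le (hg.iterate_Amap_succ_le hT hn) z,
    fun n hn hz hcz => hg.iterate_Amap_sub_conjI_le hT hz hcz hn⟩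

/-- monotonicity of the iterates `Aⁿh`, `(Aⁿh)* ∘ i`, and the
geometric decay of the gap on `dom(h) ∩ dom(h* ∘ i)`. -/
theorem statement10 (T : X → Set (StrongDual ℝ X)) (hT : IsMaxMonotoneOp T)
    (h : X × StrongDual ℝ X → EReal) (hF : InFitzFamily T h) (hproper : EProper h) :
    ∀ z : X × StrongDual ℝ X,
      (∀ n : ℕ, 1 ≤ n → Amap^[n + 1] h z ≤ Amap^[n] h z) ∧
      (∀ n : ℕ, 1 ≤ n → conjI (Amap^[n] h) z ≤ conjI (Amap^[n + 1] h) z) ∧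
      (∀ n : ℕ, 1 ≤ n → h z ≠ ⊤ → conjI h z ≠ ⊤ →
        Amap^[n] h z - conjI (Amap^[n] h) z ≤
          (((1 : ℝ) / 2 ^ (n - 1) : ℝ) : EReal) *
            (Amap h z - conjI (Amap h) z)) :=
  statement10_general T hT h hF
end
end

section
/- Let T be maximally monotone, h ∈ H(T), and define the enlargement T̆_h(ε, x) := {x* : (x*, x) ∈ ∂_{2ε} h(x, x*)} (ε-subdifferential of h at (x,x*)). Then x* ∈ T̆_h(ε, x) if and only if (A h)(x, x*) ≤ ⟨x, x*⟩ + ε, where A h := (1/2)(h + h* ∘ i). -/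
open NormedSpace

noncomputable section

variable {X : Type*} [NormedAddCommGroup X] [NormedSpace ℝ X]

/-! Rearranging the inequality that defines `(y*, y) ∈ ∂_δ h(x, x*)` and taking the supremum
over the test point gives `h(x, x*) + h*(y*, y) ≤ ⟨(x, x*), (y*, y)⟩ + δ`. At `(y*, y) = (x*, x)`
the pairing is `2⟨x, x*⟩`, and halving yields the bound on `A h`. In `EReal` the only delicate
case is `h(x, x*) = ⊤`: the subdifferential is then empty, and the conjugate inequality fails
as soon as `h` is finite somewhere. -/

namespace EReal

theorem add_iSup_le_coe_iff {ι : Sort*} (a : EReal) (f : ι → EReal) (r : ℝ) :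
    a + ⨆ i, f i ≤ r ↔ ∀ i, a + f i ≤ r := by
  refine ⟨fun H i => le_trans (add_le_add_right (le_iSup f i) a) H, fun H => ?_⟩
  induction a with
  | bot => simp
  | top =>
    have hf : ∀ i, f i = ⊥ := fun i => by
      by_contra hi
      have := H i
      rw [top_add_iff_ne_bot.2 hi, top_le_iff] at this
      exact coe_ne_top r this
    simp [hf]
  | coe a =>
    rw [add_comm, ← le_sub_iff_add_le (.inl (coe_ne_bot a)) (.inl (coe_ne_top a)), iSup_le_iff]
    exact fun i => (le_sub_iff_add_le (.inl (coe_ne_bot a)) (.inl (coe_ne_top a))).2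
      (by rw [add_comm]; exact H i)

theorem add_coe_sub_le_add_coe_iff (a g : EReal) (ℓ c δ : ℝ) :
    a + ((ℓ - c : ℝ) : EReal) ≤ g + δ ↔ a + ((ℓ : EReal) - g) ≤ ((c + δ : ℝ) : EReal) := by
  induction g with
  | bot => induction a <;> simp [-coe_sub, -coe_add]
  | top => simp
  | coe g =>
    induction a with
    | bot => simp
    | top => simp only [← coe_sub, ← coe_add, top_add_coe, top_le_iff, coe_ne_top]
    | coe a =>
      simp only [← coe_sub, ← coe_add, EReal.coe_le_coe_iff]
      constructor <;> intro <;> linarith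

theorem half_mul_le_coe_iff (s : EReal) (r : ℝ) :
    ((1 / 2 : ℝ) : EReal) * s ≤ r ↔ s ≤ ((2 * r : ℝ) : EReal) := by
  induction s with
  | bot => simp [mul_bot_of_pos]
  | top => simp [mul_top_of_pos, -coe_mul]
  | coe s =>
    rw [← coe_mul, EReal.coe_le_coe_iff, EReal.coe_le_coe_iff]
    constructor <;> intro <;> linarith

end EReal

theorem mem_epsSubdiff2_iff {h : X × StrongDual ℝ X → EReal} (hdom : ∃ w, h w ≠ ⊤) (δ : ℝ)
    (x : X) (p : StrongDual ℝ X) (y : X) (q : StrongDual ℝ X) :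
    (q, y) ∈ epsSubdiff2 h δ (x, p) ↔
      h (x, p) + conjI h (y, q) ≤ ((q x + p y + δ : ℝ) : EReal) := by
  have pointwise (u : X × StrongDual ℝ X) :
      h (x, p) + ((q (u.1 - x) + (u.2 - p) y : ℝ) : EReal) ≤ h u + δ ↔
        h (x, p) + (((q u.1 + u.2 y : ℝ) : EReal) - h u) ≤ ((q x + p y + δ : ℝ) : EReal) := by
    rw [← EReal.add_coe_sub_le_add_coe_iff]
    simp only [map_sub, sub_apply]
    ring_nf
  simp only [epsSubdiff2, conjI, Set.mem_ofPred_eq, EReal.add_iSup_le_coe_iff, ← pointwise]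
  refine ⟨And.right, fun H => ⟨fun htop => ?_, H⟩⟩
  obtain ⟨w, hw⟩ := hdom
  have := H w
  rw [htop, EReal.top_add_coe, top_le_iff] at this
  exact EReal.add_ne_top hw (EReal.coe_ne_top δ) this

theorem amap_le_coe_iff (h : X × StrongDual ℝ X → EReal) (z : X × StrongDual ℝ X) (r : ℝ) :
    Amap h z ≤ r ↔ h z + conjI h z ≤ ((2 * r : ℝ) : EReal) :=
  EReal.half_mul_le_coe_iff _ r

theorem statement14_general
    (h : X × StrongDual ℝ X → EReal) (hproper : EProper h)
    (ε : ℝ) (x : X) (p : StrongDual ℝ X) :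
    (p, x) ∈ epsSubdiff2 h (2 * ε) (x, p) ↔
      Amap h (x, p) ≤ ((p x + ε : ℝ) : EReal) := by
  rw [mem_epsSubdiff2_iff hproper.1, amap_le_coe_iff,
    show p x + p x + 2 * ε = 2 * (p x + ε) by ring]

/-- `x* ∈ T̆_h(ε,x)` (i.e. `(x*,x) ∈ ∂_{2ε} h(x,x*)`) iff
`(A h)(x,x*) ≤ ⟨x,x*⟩ + ε`. -/
theorem statement14 (T : X → Set (StrongDual ℝ X)) (hT : IsMaxMonotoneOp T)
    (h : X × StrongDual ℝ X → EReal) (hF : InFitzFamily T h) (hproper : EProper h)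
    (ε : ℝ) (hε : 0 ≤ ε) (x : X) (p : StrongDual ℝ X) :
    (p, x) ∈ epsSubdiff2 h (2 * ε) (x, p) ↔
      Amap h (x, p) ≤ ((p x + ε : ℝ) : EReal) :=
  statement14_general h hproper ε x p
end
end

section
/- For a proper lsc convex f and h := f^{FY}, the enlargement T̆_{f^{FY}}(ε, x) := {x* : (x*, x) ∈ ∂_{2ε} f^{FY}(x, x*)} equals the Brøndsted–Rockafellar enlargement: T̆_{f^{FY}}(ε, x) = ∂_ε f(x) for all ε ≥ 0 and x ∈ X. -/
open NormedSpace

noncomputable section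

variable {X : Type*} [NormedAddCommGroup X] [NormedSpace ℝ X]

/-!
Put `a = f x` and `b = f* x*`. Tested at `(y, y*)`, the inequality defining
`(x*, x) ∈ ∂_{2ε} f^{FY}(x, x*)` rearranges to
`2 (a + b - ⟨x, x*⟩) + (⟨y, x*⟩ - f y - b) + (⟨x, y*⟩ - f* y* - a) ≤ 2ε`.
The supremum over `y` of the second bracket is `0` by definition of `f*`, and the supremum over
`y*` of the third is `0` because `f** = f` at `x` (Fenchel–Moreau: separate a point below the
closed convex epigraph by Hahn–Banach). So the condition says `a + b ≤ ⟨x, x*⟩ + ε`, which is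
the Fenchel–Young characterization of `x* ∈ ∂_ε f(x)`.
-/

theorem EConvexOn.convex_epigraph {E : Type*} [AddCommMonoid E] [Module ℝ E] {f : E → EReal}
    (hf : EConvexOn f) : Convex ℝ {z : E × ℝ | f z.1 ≤ z.2} := by
  rintro ⟨y, s⟩ hy ⟨z, t⟩ hz a b ha hb hab
  calc f (a • y + b • z) ≤ (a : EReal) * f y + (b : EReal) * f z := hf y z a b ha hb hab
    _ ≤ (a : EReal) * s + (b : EReal) * t := by gcongr <;> assumption
    _ = ((a * s + b * t : ℝ) : EReal) := by norm_cast

theorem LowerSemicontinuous.isClosed_real_epigraph {E : Type*} [TopologicalSpace E]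
    {f : E → EReal} (hf : LowerSemicontinuous f) : IsClosed {z : E × ℝ | f z.1 ≤ z.2} :=
  hf.isClosed_epigraph.preimage (continuous_id.prodMap continuous_coe_real_ereal)

theorem EReal.coe_sub_le_iff_le_add_coe {a : EReal} {r s : ℝ} :
    ((r - s : ℝ) : EReal) ≤ a ↔ (r : EReal) ≤ a + s := by
  rw [EReal.coe_sub,
    EReal.sub_le_iff_le_add (.inl (EReal.coe_ne_bot s)) (.inl (EReal.coe_ne_top s))]

theorem EConvexOn.exists_affine_le_of_lt {E : Type*} [TopologicalSpace E] [AddCommGroup E]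
    [Module ℝ E] [IsTopologicalAddGroup E] [ContinuousSMul ℝ E] [LocallyConvexSpace ℝ E]
    {f : E → EReal} (hconv : EConvexOn f) (hlsc : LowerSemicontinuous f) {x : E}
    (hx : f x ≠ ⊤) {c : ℝ} (hc : (c : EReal) < f x) :
    ∃ (q : StrongDual ℝ E) (b : ℝ), (∀ y, ((q y - b : ℝ) : EReal) ≤ f y) ∧ c < q x - b := by
  obtain ⟨ℓ, u, hℓS, hℓx⟩ := geometric_hahn_banach_closed_point hconv.convex_epigraph
    hlsc.isClosed_real_epigraph (x := (x, c)) (not_le.2 hc)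
  set g := ℓ.comp (.inl ℝ E ℝ)
  set r := ℓ (0, 1)
  have hℓ : ∀ y t, ℓ (y, t) = g y + t * r := fun y t => by
    change ℓ (y, t) = ℓ (y, 0) + t • ℓ (0, 1)
    rw [← map_smul, ← map_add]
    simp
  lift f x to ℝ using ⟨hx, hc.ne_bot⟩ with A hA
  -- The hyperplane is not vertical: `(x, f x)` lies in the epigraph, above `(x, c)`.
  have hr : r < 0 := by
    have := hℓS (x, A) (by simp [← hA])
    rw [hℓ] at this hℓx
    nlinarith [EReal.coe_lt_coe_iff.1 hc]
  refine ⟨(-r)⁻¹ • g, u / -r, fun y => EReal.le_of_forall_lt_iff_le.1 fun t ht => ?_, ?_⟩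
  · have := hℓS (y, t) ht.le
    rw [hℓ] at this
    rw [EReal.coe_le_coe_iff, smul_apply, smul_eq_mul, inv_mul_eq_div,
      ← sub_div, div_le_iff₀ (neg_pos.2 hr)]
    linarith
  · rw [hℓ] at hℓx
    rw [smul_apply, smul_eq_mul, inv_mul_eq_div, ← sub_div,
      lt_div_iff₀ (neg_pos.2 hr)]
    linarith

theorem coe_sub_le_fconj (f : X → EReal) (p : StrongDual ℝ X) (y : X) :
    ((p y : ℝ) : EReal) - f y ≤ fconj f p :=
  le_iSup (fun y => ((p y : ℝ) : EReal) - f y) y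

section Conjugate

variable {f : X → EReal} {p : StrongDual ℝ X} {x : X}

theorem fconj_ne_bot (hf : ∃ x, f x ≠ ⊤) (p : StrongDual ℝ X) : fconj f p ≠ ⊥ := by
  obtain ⟨x, hx⟩ := hf
  refine ne_bot_of_le_ne_bot ?_ (coe_sub_le_fconj f p x)
  rw [sub_eq_add_neg, Ne, EReal.add_eq_bot_iff, EReal.neg_eq_bot_iff]
  simp [hx]

theorem fconj_le_coe_iff {c : ℝ} :
    fconj f p ≤ c ↔ ∀ y, ((p y - c : ℝ) : EReal) ≤ f y := by
  refine iSup_le_iff.trans (forall_congr' fun y => ?_)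
  rw [EReal.coe_sub_le_iff_le_add_coe,
    EReal.sub_le_iff_le_add (.inr (EReal.coe_ne_top c)) (.inr (EReal.coe_ne_bot c)), add_comm]

theorem mem_epsSubdiff_iff_fconj_le {ε A : ℝ} (hA : f x = A) :
    p ∈ epsSubdiff f ε x ↔ fconj f p ≤ ((p x + ε - A : ℝ) : EReal) := by
  rw [fconj_le_coe_iff, epsSubdiff, Set.mem_ofPred_eq, hA, and_iff_right (EReal.coe_ne_top A)]
  refine forall_congr' fun y => ?_
  rw [← EReal.coe_add, ← EReal.coe_sub_le_iff_le_add_coe, map_sub]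
  ring_nf

theorem EConvexOn.exists_lt_sub_fconj (hconv : EConvexOn f) (hlsc : LowerSemicontinuous f)
    (hx : f x ≠ ⊤) {c : ℝ} (hc : (c : EReal) < f x) :
    ∃ (q : StrongDual ℝ X) (b : ℝ), fconj f q ≤ b ∧ c < q x - b := by
  obtain ⟨q, b, hqb, hc⟩ := hconv.exists_affine_le_of_lt hlsc hx hc
  exact ⟨q, b, fconj_le_coe_iff.2 hqb, hc⟩

theorem exists_coe_eq_of_FYfn_ne_top (hf : EProper f) (h : FYfn f (x, p) ≠ ⊤) :
    ∃ A B : ℝ, f x = A ∧ fconj f p = B := by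
  have hp := fconj_ne_bot hf.1 p
  obtain ⟨hx_top, hp_top⟩ := (EReal.add_ne_top_iff_ne_top₂ (hf.2 x) hp).1 h
  exact ⟨_, _, (EReal.coe_toReal hx_top (hf.2 x)).symm, (EReal.coe_toReal hp_top hp).symm⟩

theorem mem_epsSubdiff_of_mem_epsSubdiff2_FYfn (hf : EProper f) (hconv : EConvexOn f)
    (hlsc : LowerSemicontinuous f) {ε : ℝ} (h : (p, x) ∈ epsSubdiff2 (FYfn f) (2 * ε) (x, p)) :
    p ∈ epsSubdiff f ε x := by
  obtain ⟨hfin, hle⟩ := h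
  obtain ⟨A, B, hA, hB⟩ := exists_coe_eq_of_FYfn_ne_top hf hfin
  rw [mem_epsSubdiff_iff_fconj_le hA, hB, EReal.coe_le_coe_iff]
  suffices A ≤ 2 * ε + 2 * p x - 2 * B - A by linarith
  refine le_of_forall_lt fun c hc => ?_
  obtain ⟨q, b, hqb, hcq⟩ := hconv.exists_lt_sub_fconj hlsc (hA ▸ EReal.coe_ne_top A)
    (hA ▸ EReal.coe_lt_coe_iff.2 hc)
  -- Testing the enlargement inequality at `(y, q)` for every `y` bounds `f* p`.
  have hB_le : B ≤ b + 2 * ε - A - B + 2 * p x - q x := by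
    rw [← EReal.coe_le_coe_iff, ← hB, fconj_le_coe_iff]
    intro y
    have key : ((A + B + (p (y - x) + (q - p) x) - (b + 2 * ε) : ℝ) : EReal) ≤ f y := by
      rw [EReal.coe_sub_le_iff_le_add_coe]
      calc ((A + B + (p (y - x) + (q - p) x) : ℝ) : EReal)
          = FYfn f (x, p) + ((p (y - x) + (q - p) x : ℝ) : EReal) := by
            rw [FYfn, hA, hB]; norm_cast
        _ ≤ FYfn f (y, q) + ((2 * ε : ℝ) : EReal) := hle (y, q)
        _ ≤ f y + b + ((2 * ε : ℝ) : EReal) := by rw [FYfn]; gcongr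
        _ = f y + ((b + 2 * ε : ℝ) : EReal) := by rw [add_assoc, EReal.coe_add]
    convert key using 2
    simp only [map_sub, sub_apply]
    ring
  linarith

theorem mem_epsSubdiff2_FYfn_of_mem_epsSubdiff (hf : EProper f) {ε : ℝ}
    (h : p ∈ epsSubdiff f ε x) : (p, x) ∈ epsSubdiff2 (FYfn f) (2 * ε) (x, p) := by
  obtain ⟨A, hA⟩ : ∃ A : ℝ, f x = A := ⟨_, (EReal.coe_toReal h.1 (hf.2 x)).symm⟩
  have hpB := (mem_epsSubdiff_iff_fconj_le hA).1 h
  obtain ⟨B, hB⟩ : ∃ B : ℝ, fconj f p = B := ⟨_, (EReal.coe_toReal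
    (ne_top_of_le_ne_top (EReal.coe_ne_top _) hpB) (fconj_ne_bot hf.1 p)).symm⟩
  rw [hB, EReal.coe_le_coe_iff] at hpB
  refine ⟨by rw [FYfn, hA, hB]; exact EReal.add_ne_top (EReal.coe_ne_top A) (EReal.coe_ne_top B),
    fun ⟨y, q⟩ => ?_⟩
  have hq : ((q x - A : ℝ) : EReal) ≤ fconj f q := by
    rw [EReal.coe_sub, ← hA]; exact coe_sub_le_fconj f q x
  calc FYfn f (x, p) + ((p (y - x) + (q - p) x : ℝ) : EReal)
      = (f x + ((p (y - x) : ℝ) : EReal)) + ((B + (q x - p x) : ℝ) : EReal) := by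
        rw [FYfn, hA, hB]; norm_cast; simp only [sub_apply]; ring
    _ ≤ (f y + ε) + (((q x - A : ℝ) : EReal) + ε) :=
        add_le_add (h.2 y) (by rw [← EReal.coe_add, EReal.coe_le_coe_iff]; linarith)
    _ ≤ (f y + ε) + (fconj f q + ε) := by gcongr
    _ = FYfn f (y, q) + ((2 * ε : ℝ) : EReal) := by
        rw [FYfn, two_mul, EReal.coe_add]; abel

end Conjugate

/-- for `h = f^{FY}`, the enlargement `T̆_{f^{FY}}` coincides with
the Brøndsted–Rockafellar enlargement (the ε-subdifferential). -/
theorem statement15 (f : X → EReal) (hproper : EProper f)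
    (hconv : EConvexOn f) (hlsc : LowerSemicontinuous f) :
    ∀ ε : ℝ, 0 ≤ ε → ∀ x : X,
      {p : StrongDual ℝ X | (p, x) ∈ epsSubdiff2 (FYfn f) (2 * ε) (x, p)} =
        epsSubdiff f ε x := by
  intro ε _ x
  ext p
  exact ⟨mem_epsSubdiff_of_mem_epsSubdiff2_FYfn hproper hconv hlsc,
    mem_epsSubdiff2_FYfn_of_mem_epsSubdiff hproper⟩
end
end

section
/- Let T be maximally monotone, h, h' ∈ H(T), and E = L^h, E' = L^{h'} the associated enlargements, where L^g(ε,x) := {x* : g(x,x*) ≤ ⟨x,x*⟩ + ε}. Then E and E' are mutually additive (i.e., ⟨x-y, x*-y*⟩ ≥ -(ε+η) whenever x* ∈ E(ε,x), y* ∈ E'(η,y)) if and only if h* ∘ i ≤ h'. -/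
open NormedSpace

noncomputable section

variable {X : Type*} [NormedAddCommGroup X] [NormedSpace ℝ X]

/-- The enlargement `L^g(ε,x) := {x* : g(x,x*) ≤ ⟨x,x*⟩ + ε}` associated with a
convex representation `g`. -/
def Lenl (g : X × StrongDual ℝ X → EReal) (ε : ℝ) (x : X) : Set (StrongDual ℝ X) :=
  {p | g (x, p) ≤ ((p x + ε : ℝ) : EReal)}

/-!
Both sides are equivalent to the coupling inequality
`⟨x, y*⟩ + ⟨y, x*⟩ ≤ h(x, x*) + h'(y, y*)`. For `h* ∘ i ≤ h'` this is the definition of the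
conjugate; for mutual additivity, take `ε` and `η` to be the gaps `h(x, x*) - ⟨x, x*⟩` and
`h'(y, y*) - ⟨y, y*⟩`, which are nonnegative because members of `H(T)` majorize the pairing.
-/

def MutuallyAdditive (g g' : X × StrongDual ℝ X → EReal) : Prop :=
  ∀ ε η : ℝ, 0 ≤ ε → 0 ≤ η → ∀ x y : X, ∀ p q : StrongDual ℝ X,
    p ∈ Lenl g ε x → q ∈ Lenl g' η y → -(ε + η) ≤ (p - q) (x - y)

lemma ne_bot_of_pairing_le {g : X × StrongDual ℝ X → EReal}
    (hg : ∀ z, (pairing z : EReal) ≤ g z) (z : X × StrongDual ℝ X) : g z ≠ ⊥ :=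
  ne_bot_of_le_ne_bot (EReal.coe_ne_bot _) (hg z)

lemma exists_mem_Lenl_of_ne_top {g : X × StrongDual ℝ X → EReal}
    (hg : ∀ z, (pairing z : EReal) ≤ g z) {x : X} {p : StrongDual ℝ X} (hne : g (x, p) ≠ ⊤) :
    ∃ ε : ℝ, 0 ≤ ε ∧ p ∈ Lenl g ε x ∧ g (x, p) = ((p x + ε : ℝ) : EReal) := by
  have hval : ((g (x, p)).toReal : EReal) = g (x, p) :=
    EReal.coe_toReal hne (ne_bot_of_pairing_le hg _)
  have hle : p x ≤ (g (x, p)).toReal := by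
    have := hg (x, p)
    rw [← hval] at this
    exact_mod_cast this
  refine ⟨(g (x, p)).toReal - p x, by linarith, ?_, ?_⟩ <;>
  · simp only [Lenl, Set.mem_ofPred_eq, add_sub_cancel, hval, le_refl]

lemma MutuallyAdditive.le_add {g g' : X × StrongDual ℝ X → EReal}
    (hadd : MutuallyAdditive g g') (hg : ∀ z, (pairing z : EReal) ≤ g z)
    (hg' : ∀ z, (pairing z : EReal) ≤ g' z) (w z : X × StrongDual ℝ X) :
    ((z.2 w.1 + w.2 z.1 : ℝ) : EReal) ≤ g w + g' z := by
  obtain ⟨x, p⟩ := w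
  obtain ⟨y, q⟩ := z
  by_cases hw : g (x, p) = ⊤
  · simp [hw, EReal.top_add_of_ne_bot (ne_bot_of_pairing_le hg' _)]
  by_cases hz : g' (y, q) = ⊤
  · simp [hz, EReal.add_top_of_ne_bot (ne_bot_of_pairing_le hg _)]
  obtain ⟨ε, hε, hp, hgp⟩ := exists_mem_Lenl_of_ne_top hg hw
  obtain ⟨η, hη, hq, hgq⟩ := exists_mem_Lenl_of_ne_top hg' hz
  have key := hadd ε η hε hη x y p q hp hq
  simp only [sub_apply, map_sub] at key
  rw [hgp, hgq, ← EReal.coe_add, EReal.coe_le_coe_iff]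
  linarith

lemma mutuallyAdditive_of_le_add {g g' : X × StrongDual ℝ X → EReal}
    (hle : ∀ w z : X × StrongDual ℝ X, ((z.2 w.1 + w.2 z.1 : ℝ) : EReal) ≤ g w + g' z) :
    MutuallyAdditive g g' := by
  intro ε η _ _ x y p q hp hq
  have key := (hle (x, p) (y, q)).trans (add_le_add hp hq)
  rw [← EReal.coe_add, EReal.coe_le_coe_iff] at key
  simp only [sub_apply, map_sub]
  linarith

lemma forall_conjI_le_iff {g g' : X × StrongDual ℝ X → EReal}
    (hg : ∀ z, g z ≠ ⊥) (hg' : ∀ z, g' z ≠ ⊥) :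
    (∀ z, conjI g z ≤ g' z) ↔
      ∀ w z : X × StrongDual ℝ X, ((z.2 w.1 + w.2 z.1 : ℝ) : EReal) ≤ g w + g' z := by
  simp only [conjI, iSup_le_iff]
  rw [forall_comm]
  refine forall₂_congr fun w z => ?_
  rw [EReal.sub_le_iff_le_add (Or.inl (hg w)) (Or.inr (hg' z)), add_comm (g' z)]

theorem statement16_general (T : X → Set (StrongDual ℝ X))
    (h h' : X × StrongDual ℝ X → EReal)
    (hF : InFitzFamily T h) (hF' : InFitzFamily T h') :
    (∀ ε η : ℝ, 0 ≤ ε → 0 ≤ η → ∀ x y : X, ∀ p q : StrongDual ℝ X,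
        p ∈ Lenl h ε x → q ∈ Lenl h' η y →
          -(ε + η) ≤ (p - q) (x - y)) ↔
      ∀ z, conjI h z ≤ h' z := by
  have hh := hF.2.2.1
  have hh' := hF'.2.2.1
  rw [forall_conjI_le_iff (ne_bot_of_pairing_le hh) (ne_bot_of_pairing_le hh')]
  exact ⟨fun hadd => MutuallyAdditive.le_add hadd hh hh', mutuallyAdditive_of_le_add⟩

/-- `L^h` and `L^{h'}` are mutually additive iff `h* ∘ i ≤ h'`. -/
theorem statement16 (T : X → Set (StrongDual ℝ X)) (hT : IsMaxMonotoneOp T)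
    (h h' : X × StrongDual ℝ X → EReal)
    (hF : InFitzFamily T h) (hF' : InFitzFamily T h')
    (hp : EProper h) (hp' : EProper h') :
    (∀ ε η : ℝ, 0 ≤ ε → 0 ≤ η → ∀ x y : X, ∀ p q : StrongDual ℝ X,
        p ∈ Lenl h ε x → q ∈ Lenl h' η y →
          -(ε + η) ≤ (p - q) (x - y)) ↔
      ∀ z, conjI h z ≤ h' z :=
  statement16_general T h h' hF hF'
end
end
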